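/- Let ρ be a pure state and σ any density operator on a d-dimensional space, with Pauli-type coefficients ρ_i, σ_i as above. Define the random variable X taking value σ_i/ρ_i with probability Pr(i) = ρ_i²/d (over those i with ρ_i ≠ 0). Then E[X] = tr(ρσ) and Var(X) ≤ tr(σ²) − (tr ρσ)² ≤ 1. -/

import Mathlib

open Matrix BigOperators Finset
open scoped ComplexOrder

theorem aux_s_le_one (d : ℕ) (σ : Matrix (Fin d) (Fin d) ℂ) (hσpos : σ.PosSemidef) (hσtr : σ.trace = 1)
    (s : ℝ) (hs : (σ * σ).trace = (s : ℂ)) : s ≤ 1 := by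
  have hH := hσpos.1
  have hspec := hH.spectral_theorem
  rw [Unitary.conjStarAlgAut_apply] at hspec
  set U : Matrix (Fin d) (Fin d) ℂ := (hH.eigenvectorUnitary : Matrix (Fin d) (Fin d) ℂ) with hU
  set D : Matrix (Fin d) (Fin d) ℂ := diagonal (RCLike.ofReal ∘ hH.eigenvalues) with hD
  have hUU : star U * U = 1 := (Matrix.mem_unitaryGroup_iff').mp hH.eigenvectorUnitary.2
  have htrσ : σ.trace = ∑ i, (hH.eigenvalues i : ℂ) := by
    conv_lhs => rw [hspec]
    rw [Matrix.trace_mul_comm, ← mul_assoc, hUU, one_mul]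
    simp [hD, Matrix.trace_diagonal]
  have key : σ * σ = U * (D * D) * star U := by
    conv_lhs => rw [hspec]
    calc U*D*star U*(U*D*star U) = U*(D*((star U*U)*(D*star U))) := by simp only [mul_assoc]
    _ = U*(D*(D*star U)) := by rw [hUU, one_mul]
    _ = U*(D*D)*star U := by simp only [mul_assoc]
  have htrσ2 : (σ * σ).trace = ∑ i, (hH.eigenvalues i : ℂ) ^ 2 := by
    rw [key, Matrix.trace_mul_comm, ← mul_assoc, hUU, one_mul]
    simp [hD, Matrix.diagonal_mul_diagonal, Matrix.trace_diagonal, sq]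
  have h1 : ∑ i, hH.eigenvalues i = 1 := by
    have h := hσtr; rw [htrσ] at h; exact_mod_cast h
  have h2 : ∑ i, hH.eigenvalues i ^ 2 = s := by
    have h := hs; rw [htrσ2] at h; exact_mod_cast h
  have hnn := hσpos.eigenvalues_nonneg
  have hle : ∑ i, hH.eigenvalues i ^ 2 ≤ (∑ i, hH.eigenvalues i) ^ 2 := by
    rw [sq (∑ i, hH.eigenvalues i), Finset.sum_mul]
    apply Finset.sum_le_sum
    intro i _
    rw [sq]
    exact mul_le_mul_of_nonneg_left
      (Finset.single_le_sum (fun j _ => hnn j) (Finset.mem_univ i)) (hnn i)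
  rw [h1] at hle; rw [h2] at hle; linarith


/-- For a pure state `ρ` and a density operator `σ` with real coefficients `ρᵢ, σᵢ` over an
orthogonal Hermitian basis, the random variable `X` taking value `σᵢ/ρᵢ` with probability
`Pr(i) = ρᵢ²/d` (over the `i` with `ρᵢ ≠ 0`) has mean `E[X] = tr(ρσ)` and variance
`Var(X) ≤ tr(σ²) − (tr ρσ)² ≤ 1`. -/
theorem stmt2 (d : ℕ) (hd : 0 < d)
    (ρ σ : Matrix (Fin d) (Fin d) ℂ)
    (P : Fin (d ^ 2) → Matrix (Fin d) (Fin d) ℂ)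
    (hρpos : ρ.PosSemidef) (hρtr : ρ.trace = 1)
    (hpure : (ρ * ρ).trace = 1)
    (hσpos : σ.PosSemidef) (hσtr : σ.trace = 1)
    (hHerm : ∀ i, (P i).IsHermitian)
    (horth : ∀ i j, (P i * P j).trace = if i = j then (d : ℂ) else 0)
    (hspanρ : ∃ c : Fin (d ^ 2) → ℂ, ρ = ∑ i, c i • P i)
    (hspanσ : ∃ c : Fin (d ^ 2) → ℂ, σ = ∑ i, c i • P i)
    (ρc σc : Fin (d ^ 2) → ℝ)
    (hρc : ∀ i, (ρ * P i).trace = (ρc i : ℂ))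
    (hσc : ∀ i, (σ * P i).trace = (σc i : ℂ))
    (F : ℝ) (hF : (ρ * σ).trace = (F : ℂ))
    (s : ℝ) (hs : (σ * σ).trace = (s : ℂ)) :
    (∑ i ∈ univ.filter fun i => ρc i ≠ 0, (ρc i ^ 2 / d) * (σc i / ρc i)) = F ∧
    (∑ i ∈ univ.filter fun i => ρc i ≠ 0, (ρc i ^ 2 / d) * (σc i / ρc i) ^ 2) - F ^ 2
      ≤ s - F ^ 2 ∧
    s - F ^ 2 ≤ 1 := by
  have hdC : (d : ℂ) ≠ 0 := Nat.cast_ne_zero.mpr hd.ne'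
  have hdR : (0 : ℝ) < (d : ℝ) := Nat.cast_pos.mpr hd
  obtain ⟨c, hc⟩ := hspanσ
  -- coefficients of σ
  have hcj : ∀ j, c j = (σc j : ℂ) / d := by
    intro j
    have h1 : (σ * P j).trace = c j * d := by
      rw [hc, Matrix.sum_mul, Matrix.trace_sum]
      rw [Finset.sum_eq_single j]
      · rw [Matrix.smul_mul, Matrix.trace_smul, horth, if_pos rfl]; simp [smul_eq_mul]
      · intro i _ hij
        rw [Matrix.smul_mul, Matrix.trace_smul, horth, if_neg hij]; simp
      · simp
    have := (hσc j).symm.trans h1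
    field_simp
    linear_combination -this
  -- expansion of traces against σ
  have key : ∀ A : Matrix (Fin d) (Fin d) ℂ, (A * σ).trace = ∑ j, (σc j : ℂ) / d * (A * P j).trace := by
    intro A
    rw [hc, Finset.mul_sum, Matrix.trace_sum]
    exact Finset.sum_congr rfl fun j _ => by rw [Matrix.mul_smul, Matrix.trace_smul, hcj j, smul_eq_mul]
  -- F and s as real sums
  have hFsum : F = ∑ j, σc j * ρc j / d := by
    have h := (key ρ).symm.trans hF
    have : ((∑ j, σc j * ρc j / d : ℝ) : ℂ) = (F : ℂ) := by
      rw [← h]; push_cast; exact Finset.sum_congr rfl fun j _ => by rw [hρc j]; ring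
    exact_mod_cast this.symm
  have hssum : s = ∑ j, σc j ^ 2 / d := by
    have h := (key σ).symm.trans hs
    have : ((∑ j, σc j ^ 2 / d : ℝ) : ℂ) = (s : ℂ) := by
      rw [← h]; push_cast; exact Finset.sum_congr rfl fun j _ => by rw [hσc j]; ring
    exact_mod_cast this.symm
  refine ⟨?_, ?_, ?_⟩
  · rw [hFsum]
    rw [Finset.sum_filter]
    apply Finset.sum_congr rfl
    intro i _
    by_cases h : ρc i = 0
    · simp [h]
    · rw [if_pos h]; field_simp
  · have h2 : (∑ i ∈ univ.filter fun i => ρc i ≠ 0, (ρc i ^ 2 / d) * (σc i / ρc i) ^ 2)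
        ≤ s := by
      rw [hssum]
      calc (∑ i ∈ univ.filter fun i => ρc i ≠ 0, (ρc i ^ 2 / d) * (σc i / ρc i) ^ 2)
          = ∑ i ∈ univ.filter fun i => ρc i ≠ 0, σc i ^ 2 / d := by
            apply Finset.sum_congr rfl
            intro i hi
            rw [Finset.mem_filter] at hi
            field_simp [hi.2]
      _ ≤ ∑ j, σc j ^ 2 / d := by
            apply Finset.sum_le_sum_of_subset_of_nonneg (Finset.filter_subset _ _)
            intro i _ _
            positivity
    linarith
  · have hsle : s ≤ 1 := aux_s_le_one d σ hσpos hσtr s hs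
    nlinarith [sq_nonneg F]
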